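/- (Christoffel–Darboux formula for Hermite polynomials.) For every natural number k and all complex numbers x ≠ y, Σ_{m=0}^{k} He_m(x) He_m(y)/m! = (He_k(y) He_{k+1}(x) − He_k(x) He_{k+1}(y)) / (k! · (x − y)). -/

import Mathlib

open Finset Nat

/-- Probabilists' Hermite polynomial `He_k` evaluated at a complex argument. -/
noncomputable def He (k : ℕ) (x : ℂ) : ℂ :=
  (k ! : ℂ) * ∑ m ∈ Finset.range (k / 2 + 1),
    (-1 : ℂ) ^ m * x ^ (k - 2 * m) / ((2 : ℂ) ^ m * (m ! : ℂ) * ((k - 2 * m)! : ℂ))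

/-!
`He n` is the evaluation of Mathlib's `Polynomial.hermite n`, whose recurrence
`hermite (n + 1) = X * hermite n - (hermite n)'` together with
`(hermite (n + 1))' = (n + 1) hermite n` gives the three-term recurrence
`He (n + 2) = x He (n + 1) - (n + 1) He n`. Hence
`D n := He n y He (n + 1) x - He n x He (n + 1) y` satisfies
`D (n + 1) = (x - y) He (n + 1) x He (n + 1) y + (n + 1) D n`, so `D n / n!` telescopes to
`(x - y) ∑_{m ≤ n} He m x He m y / m!`.
-/

theorem Nat.factorial_two_mul (m : ℕ) : (2 * m)! = 2 ^ m * m ! * (2 * m - 1)‼ := by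
  cases m with
  | zero => rfl
  | succ m =>
    rw [show 2 * (m + 1) = 2 * m + 1 + 1 by ring, factorial_eq_mul_doubleFactorial,
      show 2 * m + 1 + 1 = 2 * (m + 1) by ring, doubleFactorial_two_mul]
    rfl

theorem Finset.sum_range_sub_two_mul {M : Type*} [AddCommMonoid M] (n : ℕ) (f : ℕ → M)
    (hf : ∀ k, Odd (n + k) → f k = 0) :
    ∑ m ∈ range (n / 2 + 1), f (n - 2 * m) = ∑ k ∈ range (n + 1), f k := by
  have hinj : Set.InjOn (fun m => n - 2 * m) (range (n / 2 + 1)) := by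
    intro a ha b hb hab
    simp only [coe_range, Set.mem_Iio] at ha hb
    simp only at hab
    omega
  rw [← sum_image hinj]
  refine sum_subset (fun k hk => ?_) (fun k hk hk' => hf k ?_)
  · obtain ⟨m, -, rfl⟩ := mem_image.1 hk
    exact mem_range.2 (by omega)
  · refine Nat.not_even_iff_odd.1 fun ⟨c, hc⟩ => hk' (mem_image.2 ⟨(n - k) / 2, ?_, ?_⟩)
    · exact mem_range.2 (by omega)
    · have := mem_range.1 hk
      omega

namespace Polynomial

theorem derivative_hermite_succ (n : ℕ) :
    derivative (hermite (n + 1)) = ((n : ℤ[X]) + 1) * hermite n := by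
  induction n with
  | zero => simp
  | succ n ih =>
    rw [hermite_succ (n + 1), derivative_sub, derivative_mul, derivative_X, ih, derivative_mul,
      hermite_succ n]
    simp only [derivative_add, derivative_natCast, derivative_one, Nat.cast_add, Nat.cast_one]
    ring

theorem hermite_add_two (n : ℕ) :
    hermite (n + 2) = X * hermite (n + 1) - ((n : ℤ[X]) + 1) * hermite n := by
  rw [hermite_succ (n + 1), derivative_hermite_succ]

theorem coeff_hermite_sub_two_mul_mul {n m : ℕ} (h : 2 * m ≤ n) :
    (hermite n).coeff (n - 2 * m) * (2 ^ m * m ! * (n - 2 * m)!) = (-1) ^ m * n ! := by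
  obtain ⟨j, rfl⟩ := Nat.exists_eq_add_of_le h
  have hfac : (2 * m - 1)‼ * (2 * m + j).choose j * (2 ^ m * m ! * j !) = (2 * m + j)! := by
    rw [← add_choose_mul_factorial_mul_factorial, factorial_two_mul]
    ring
  rw [Nat.add_sub_cancel_left, coeff_hermite_explicit, ← hfac]
  push_cast
  ring

theorem coeff_hermite_sub_two_mul {K : Type*} [Field K] [CharZero K] {n m : ℕ} (h : 2 * m ≤ n) :
    ((hermite n).coeff (n - 2 * m) : K) =
      (-1) ^ m * n ! / (2 ^ m * m ! * (n - 2 * m)!) := by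
  rw [eq_div_iff (by simp [factorial_ne_zero])]
  exact_mod_cast coeff_hermite_sub_two_mul_mul h

end Polynomial

open Polynomial

theorem He_eq_aeval_hermite (n : ℕ) (x : ℂ) : He n x = aeval x (hermite n) := by
  calc He n x
      = ∑ m ∈ range (n / 2 + 1), ((hermite n).coeff (n - 2 * m) : ℂ) * x ^ (n - 2 * m) := by
        rw [He, mul_sum]
        refine sum_congr rfl fun m hm => ?_
        rw [coeff_hermite_sub_two_mul (by have := mem_range.1 hm; omega)]
        ring
    _ = ∑ k ∈ range (n + 1), ((hermite n).coeff k : ℂ) * x ^ k :=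
        sum_range_sub_two_mul n (fun k => ((hermite n).coeff k : ℂ) * x ^ k) fun k hk => by
          simp [coeff_hermite_of_odd_add hk]
    _ = aeval x (hermite n) := by
        simp [aeval_eq_sum_range, natDegree_hermite, zsmul_eq_mul]

theorem He_zero (x : ℂ) : He 0 x = 1 := by
  simp [He_eq_aeval_hermite]

theorem He_one (x : ℂ) : He 1 x = x := by
  simp [He_eq_aeval_hermite]

theorem He_add_two (n : ℕ) (x : ℂ) : He (n + 2) x = x * He (n + 1) x - (n + 1) * He n x := by
  simp only [He_eq_aeval_hermite, hermite_add_two]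
  simp

theorem He_casoratian_succ (n : ℕ) (x y : ℂ) :
    He (n + 1) y * He (n + 2) x - He (n + 1) x * He (n + 2) y =
      (x - y) * He (n + 1) x * He (n + 1) y +
        (n + 1) * (He n y * He (n + 1) x - He n x * He (n + 1) y) := by
  rw [He_add_two, He_add_two]
  ring

theorem sub_mul_sum_He_mul_He_div_factorial (k : ℕ) (x y : ℂ) :
    (x - y) * ∑ m ∈ range (k + 1), He m x * He m y / (m ! : ℂ) =
      (He k y * He (k + 1) x - He k x * He (k + 1) y) / (k ! : ℂ) := by
  induction k with
  | zero => simp [He_zero, He_one]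
  | succ k ih =>
    rw [sum_range_succ, mul_add, ih, He_casoratian_succ, factorial_succ]
    push_cast
    field_simp
    ring

/-- Christoffel–Darboux formula for the probabilists' Hermite polynomials. -/
theorem hermite_christoffel_darboux (k : ℕ) (x y : ℂ) (hxy : x ≠ y) :
    ∑ m ∈ Finset.range (k + 1), He m x * He m y / (m ! : ℂ) =
      (He k y * He (k + 1) x - He k x * He (k + 1) y) / ((k ! : ℂ) * (x - y)) := by
  rw [← div_div, ← sub_mul_sum_He_mul_He_div_factorial,
    mul_div_cancel_left₀ _ (sub_ne_zero.2 hxy)]
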